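/- For all nonnegative integers α ≠ β, one has I(α,β) = (He_{α+1}(0)·He_β(0) − He_{β+1}(0)·He_α(0)) / (α − β). -/

import Mathlib

/-!
Since `He_{n+1}' = (n+1) He_n` and `(He_n e^{-x²/2})' = -He_{n+1} e^{-x²/2}`, the function
`W = (He_{α+1} He_β - He_{β+1} He_α) e^{-x²/2}` has derivative `(α - β) He_α He_β e^{-x²/2}`.
Both `W` and its derivative are polynomials times a Gaussian, hence integrable, so `W → 0`
at `-∞` and the fundamental theorem of calculus on `(-∞, 0]` gives `(α - β) I(α, β) = W(0)`.
-/

open MeasureTheory Real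

noncomputable def He (n : ℕ) (x : ℝ) : ℝ := Polynomial.aeval x (Polynomial.hermite n)

noncomputable def I (a b : ℕ) : ℝ :=
  ∫ x in Set.Iic (0 : ℝ), He a x * He b x * Real.exp (-x ^ 2 / 2)

open Polynomial Set

theorem Polynomial.derivative_hermite_succ (n : ℕ) :
    derivative (hermite (n + 1)) = (n + 1 : ℤ[X]) * hermite n := by
  induction n with
  | zero => simp [hermite_succ]
  | succ n ih =>
    rw [hermite_succ (n + 1), derivative_sub, derivative_mul, derivative_X, one_mul, ih,
      derivative_mul, hermite_succ n]
    push_cast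
    simp only [derivative_add, derivative_natCast, derivative_one, add_zero, zero_mul, zero_add]
    ring

theorem hasDerivAt_He_succ (n : ℕ) (x : ℝ) :
    HasDerivAt (He (n + 1)) ((n + 1) * He n x) x := by
  have h := (hermite (n + 1)).hasDerivAt_aeval x
  rw [derivative_hermite_succ] at h
  exact h.congr_deriv (by simp [He])

theorem hasDerivAt_He_mul_exp (n : ℕ) (x : ℝ) :
    HasDerivAt (fun x => He n x * exp (-x ^ 2 / 2)) (-(He (n + 1) x * exp (-x ^ 2 / 2))) x := by
  have hsq : HasDerivAt (fun x : ℝ => -x ^ 2 / 2) (-x) x :=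
    ((hasDerivAt_pow 2 x).neg.div_const 2).congr_deriv (by ring)
  refine (((hermite n).hasDerivAt_aeval x).mul hsq.exp).congr_deriv ?_
  simp only [He, hermite_succ, map_sub, map_mul, aeval_X]
  ring

theorem integral_Iic_of_hasDerivAt_of_integrableOn {E : Type*} [NormedAddCommGroup E]
    [NormedSpace ℝ E] [CompleteSpace E] {f f' : ℝ → E} {a : ℝ}
    (hderiv : ∀ x ∈ Iic a, HasDerivAt f (f' x) x) (hf' : IntegrableOn f' (Iic a))
    (hf : IntegrableOn f (Iic a)) : ∫ x in Iic a, f' x = f a := by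
  simpa using integral_Iic_of_hasDerivAt_of_tendsto' hderiv hf'
    (tendsto_zero_of_hasDerivAt_of_integrableOn_Iic hderiv hf' hf)

theorem integrable_aeval_mul_exp_neg_sq_div_two {R : Type*} [CommSemiring R] [Algebra R ℝ]
    (p : R[X]) : Integrable fun x : ℝ => aeval x p * exp (-x ^ 2 / 2) := by
  induction p using Polynomial.induction_on' with
  | add p q hp hq =>
    simp only [map_add, add_mul]
    exact hp.add hq
  | monomial k a =>
    have h := integrable_rpow_mul_exp_neg_mul_sq (b := 1 / 2) (by norm_num) (s := k)
      (by linarith [k.cast_nonneg (α := ℝ)])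
    simpa [aeval_monomial, mul_assoc, neg_div, div_eq_inv_mul] using h.const_mul (algebraMap R ℝ a)

/-- Since `He_{k+1} = x He_k - He_k'`, the bracket is the Wronskian `He_m He_n' - He_m' He_n`. -/
noncomputable def hermiteWronskian (m n : ℕ) (x : ℝ) : ℝ :=
  (He (m + 1) x * He n x - He (n + 1) x * He m x) * exp (-x ^ 2 / 2)

theorem hasDerivAt_hermiteWronskian (m n : ℕ) (x : ℝ) :
    HasDerivAt (hermiteWronskian m n) ((m - n) * (He m x * He n x * exp (-x ^ 2 / 2))) x := by
  have h := ((hasDerivAt_He_succ m x).mul (hasDerivAt_He_mul_exp n x)).sub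
    ((hasDerivAt_He_succ n x).mul (hasDerivAt_He_mul_exp m x))
  have hW : hermiteWronskian m n = fun x =>
      He (m + 1) x * (He n x * exp (-x ^ 2 / 2)) - He (n + 1) x * (He m x * exp (-x ^ 2 / 2)) := by
    funext y
    simp only [hermiteWronskian]
    ring
  rw [hW]
  exact h.congr_deriv (by ring)

theorem integrable_hermiteWronskian (m n : ℕ) : Integrable (hermiteWronskian m n) := by
  have h := integrable_aeval_mul_exp_neg_sq_div_two
    (hermite (m + 1) * hermite n - hermite (n + 1) * hermite m)
  simp only [map_sub, map_mul] at h
  exact h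

theorem integrable_He_mul_He_mul_exp (m n : ℕ) :
    Integrable fun x => He m x * He n x * exp (-x ^ 2 / 2) := by
  simpa only [He, map_mul] using integrable_aeval_mul_exp_neg_sq_div_two (hermite m * hermite n)

theorem I_eq_of_ne (α β : ℕ) (h : α ≠ β) :
    I α β = (He (α + 1) 0 * He β 0 - He (β + 1) 0 * He α 0) / ((α : ℝ) - β) := by
  have hFTC := integral_Iic_of_hasDerivAt_of_integrableOn (a := 0)
    (fun x _ => hasDerivAt_hermiteWronskian α β x)
    ((integrable_He_mul_He_mul_exp α β).const_mul _).integrableOn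
    (integrable_hermiteWronskian α β).integrableOn
  rw [integral_const_mul] at hFTC
  rw [I, eq_div_iff (sub_ne_zero.mpr (Nat.cast_injective.ne h)), mul_comm, hFTC, hermiteWronskian]
  simp
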